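/- Let E be a finite set with |E| = t and let M be an integer with 1 ≤ M < t. Let S_mix be a random subset of E distributed uniformly over all M-element subsets of E, and let S_in be a random subset of E obtained by including each element independently with probability M/t. Then for every collection F of subsets of E, Pr(S_mix ∈ F) ≤ e·√M·Pr(S_in ∈ F). -/
import Mathlib


open Finset
open scoped Classical

/-- Probability, under the uniform distribution over the `M`-element subsets of `E`,
of the event `P`. -/
noncomputable def prUnif {α : Type*} (E : Finset α) (M : ℕ) (P : Finset α → Prop) : ℝ :=
  (∑ S ∈ E.powersetCard M, if P S then (1 : ℝ) else 0) / (E.powersetCard M).card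

/-- Probability of the event `P` under independent Bernoulli(`p`) sampling of the
elements of `E`. -/
noncomputable def prBer {α : Type*} (E : Finset α) (p : ℝ)
    (P : Finset α → Prop) : ℝ :=
  ∑ S ∈ E.powerset, if P S then p ^ S.card * (1 - p) ^ (E.card - S.card) else 0

/-! Auxiliary lemmas -/

-- (k+1)^k ≤ k^k * e for k ≥ 1
lemma pow_succ_le (k : ℕ) (hk : 1 ≤ k) :
    ((k : ℝ) + 1) ^ k ≤ (k : ℝ) ^ k * Real.exp 1 := by
  have hk0 : (0 : ℝ) < k := by exact_mod_cast hk
  have h1 : (k : ℝ) + 1 ≤ k * Real.exp (1 / k) := by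
    have := Real.add_one_le_exp (1 / (k : ℝ))
    calc (k : ℝ) + 1 = k * (1 / k + 1) := by field_simp; ring
    _ ≤ k * Real.exp (1 / k) := by
        exact mul_le_mul_of_nonneg_left this hk0.le
  calc ((k : ℝ) + 1) ^ k ≤ ((k : ℝ) * Real.exp (1 / k)) ^ k := by
        exact pow_le_pow_left₀ (by positivity) h1 k
    _ = (k : ℝ) ^ k * Real.exp 1 := by
        rw [mul_pow, ← Real.exp_nat_mul]
        congr 2
        field_simp

-- (k+j)^(k+j) * k! ≤ (k+j)! * k^k * e^j  for k ≥ 1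
lemma factB : ∀ j : ℕ, ∀ k : ℕ, 1 ≤ k →
    ((k + j : ℕ) : ℝ) ^ (k + j) * (k.factorial : ℝ) ≤
      ((k + j).factorial : ℝ) * (k : ℝ) ^ k * Real.exp j := by
  intro j
  induction j with
  | zero => intro k hk; simp [Real.exp_zero]; ring_nf; exact le_refl _
  | succ j ih =>
      intro k hk
      have hk0 : (0 : ℝ) < k := by exact_mod_cast hk
      have h1 := ih (k + 1) (by omega)
      have hcast : ((k + 1 + j : ℕ) : ℝ) = ((k + (j + 1) : ℕ) : ℝ) := by push_cast; ring
      have heq : k + 1 + j = k + (j + 1) := by omega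
      rw [heq] at h1
      -- h1 : (t)^t * (k+1)! ≤ t! * (k+1)^(k+1) * e^j  with t = k+(j+1)
      have hfac : ((k + 1).factorial : ℝ) = (k + 1) * k.factorial := by
        push_cast [Nat.factorial_succ]; ring
      rw [hfac] at h1
      have hkey : ((k : ℝ) + 1) ^ (k + 1) * Real.exp j ≤
          ((k : ℝ) + 1) * ((k : ℝ) ^ k * Real.exp (j + 1)) := by
        have := pow_succ_le k hk
        have h2 : ((k : ℝ) + 1) ^ (k + 1) = ((k : ℝ) + 1) * ((k : ℝ) + 1) ^ k := by ring
        rw [h2, Real.exp_add]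
        calc ((k : ℝ) + 1) * ((k : ℝ) + 1) ^ k * Real.exp j
            ≤ ((k : ℝ) + 1) * ((k : ℝ) ^ k * Real.exp 1) * Real.exp j := by
              apply mul_le_mul_of_nonneg_right _ (Real.exp_pos _).le
              exact mul_le_mul_of_nonneg_left this (by positivity)
          _ = ((k : ℝ) + 1) * ((k : ℝ) ^ k * (Real.exp ↑j * Real.exp 1)) := by ring
      have hpos : (0 : ℝ) < (k : ℝ) + 1 := by positivity
      have h3 : ((k + (j + 1) : ℕ) : ℝ) ^ (k + (j + 1)) * (((k : ℝ) + 1) * k.factorial) ≤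
          ((k + (j + 1)).factorial : ℝ) * (((k : ℝ) + 1) * ((k : ℝ) ^ k * Real.exp (j + 1))) := by
        calc ((k + (j + 1) : ℕ) : ℝ) ^ (k + (j + 1)) * (((k : ℝ) + 1) * k.factorial)
            ≤ ((k + (j + 1)).factorial : ℝ) * ((k : ℝ) + 1) ^ (k + 1) * Real.exp j := by
              convert h1 using 2; push_cast; ring
          _ ≤ ((k + (j + 1)).factorial : ℝ) * (((k : ℝ) + 1) * ((k : ℝ) ^ k * Real.exp (j + 1))) := by
              rw [mul_assoc]
              exact mul_le_mul_of_nonneg_left hkey (by positivity)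
      have := le_of_mul_le_mul_left (by
        calc ((k : ℝ) + 1) * (((k + (j + 1) : ℕ) : ℝ) ^ (k + (j + 1)) * k.factorial)
            = ((k + (j + 1) : ℕ) : ℝ) ^ (k + (j + 1)) * (((k : ℝ) + 1) * k.factorial) := by ring
          _ ≤ ((k + (j + 1)).factorial : ℝ) * (((k : ℝ) + 1) * ((k : ℝ) ^ k * Real.exp (j + 1))) := h3
          _ = ((k : ℝ) + 1) * (((k + (j + 1)).factorial : ℝ) * (k : ℝ) ^ k * Real.exp (j + 1)) := by ring)
        hpos
      push_cast at this ⊢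
      convert this using 2

-- M! ≤ e * √M * (M/e)^M for M ≥ 1
lemma factA (M : ℕ) (hM : 1 ≤ M) :
    (M.factorial : ℝ) ≤ Real.exp 1 * Real.sqrt M * ((M : ℝ) / Real.exp 1) ^ M := by
  have hM0 : (0 : ℝ) < M := by exact_mod_cast hM
  obtain ⟨m, rfl⟩ : ∃ m, M = m + 1 := ⟨M - 1, by omega⟩
  have hanti := Stirling.log_stirlingSeq'_antitone (Nat.zero_le m)
  simp only [Function.comp] at hanti
  have hpos1 := Stirling.stirlingSeq'_pos 0
  have hposm := Stirling.stirlingSeq'_pos m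
  have hle : Stirling.stirlingSeq (m + 1) ≤ Stirling.stirlingSeq 1 := by
    have := Real.exp_le_exp.mpr hanti
    rwa [Real.exp_log hposm, Real.exp_log (by simpa using hpos1)] at this
  rw [Stirling.stirlingSeq_one] at hle
  have hdef : Stirling.stirlingSeq (m + 1) =
      ((m + 1).factorial : ℝ) / (Real.sqrt (2 * ((m + 1 : ℕ) : ℝ)) * (((m + 1 : ℕ) : ℝ) / Real.exp 1) ^ (m + 1)) := by
    rfl
  have hden : (0 : ℝ) < Real.sqrt (2 * ((m + 1 : ℕ) : ℝ)) * (((m + 1 : ℕ) : ℝ) / Real.exp 1) ^ (m + 1) := by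
    have : (0 : ℝ) < ((m + 1 : ℕ) : ℝ) := by positivity
    positivity
  rw [hdef, div_le_iff₀ hden] at hle
  calc ((m + 1).factorial : ℝ)
      ≤ Real.exp 1 / Real.sqrt 2 * (Real.sqrt (2 * ((m + 1 : ℕ) : ℝ)) * (((m + 1 : ℕ) : ℝ) / Real.exp 1) ^ (m + 1)) := hle
    _ = Real.exp 1 * Real.sqrt (m + 1) * (((m + 1 : ℕ) : ℝ) / Real.exp 1) ^ (m + 1) := by
        rw [show (2 : ℝ) * ((m + 1 : ℕ) : ℝ) = 2 * ((m : ℝ) + 1) by push_cast; ring,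
          Real.sqrt_mul (by norm_num : (0:ℝ) ≤ 2)]
        have h2 : Real.sqrt 2 ≠ 0 := by positivity
        field_simp
    _ = Real.exp 1 * Real.sqrt ((m + 1 : ℕ) : ℝ) * (((m + 1 : ℕ) : ℝ) / Real.exp 1) ^ (m + 1) := by
        norm_num

lemma keyBound (t M : ℕ) (hM : 1 ≤ M) (hMt : M < t) :
    (1 : ℝ) ≤ Real.exp 1 * Real.sqrt M * (t.choose M : ℝ) * ((M : ℝ) / t) ^ M *
      (((t - M : ℕ) : ℝ) / t) ^ (t - M) := by
  set k := t - M with hk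
  have hkM : k + M = t := by omega
  have hk1 : 1 ≤ k := by omega
  have hf1 : (0 : ℝ) < M.factorial := by exact_mod_cast M.factorial_pos
  have hf2 : (0 : ℝ) < k.factorial := by exact_mod_cast k.factorial_pos
  have hf3 : (0 : ℝ) < t.factorial := by exact_mod_cast t.factorial_pos
  have ht0 : (0 : ℝ) < t := by exact_mod_cast (by omega : 0 < t)
  have hM0 : (0 : ℝ) < M := by exact_mod_cast hM
  have hk0 : (0 : ℝ) < k := by exact_mod_cast hk1
  have hB := factB M k hk1
  rw [hkM] at hB
  have hA := factA M hM
  have hcancel : ((M : ℝ) / Real.exp 1) ^ M * Real.exp ↑M = (M : ℝ) ^ M := by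
    have he : Real.exp ((M : ℕ) : ℝ) = Real.exp 1 ^ M := by
      rw [← Real.exp_nat_mul, mul_one]
    rw [div_pow, he]
    field_simp
  have hmain : (M.factorial : ℝ) * k.factorial * (t : ℝ) ^ t ≤
      Real.exp 1 * Real.sqrt M * (M : ℝ) ^ M * t.factorial * (k : ℝ) ^ k := by
    calc (M.factorial : ℝ) * k.factorial * (t : ℝ) ^ t
        = (M.factorial : ℝ) * ((t : ℝ) ^ t * k.factorial) := by ring
      _ ≤ (Real.exp 1 * Real.sqrt M * ((M : ℝ) / Real.exp 1) ^ M) *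
          ((t.factorial : ℝ) * (k : ℝ) ^ k * Real.exp ↑M) :=
          mul_le_mul hA hB (by positivity) (by positivity)
      _ = Real.exp 1 * Real.sqrt M * (((M : ℝ) / Real.exp 1) ^ M * Real.exp ↑M) *
          t.factorial * (k : ℝ) ^ k := by ring
      _ = Real.exp 1 * Real.sqrt M * (M : ℝ) ^ M * t.factorial * (k : ℝ) ^ k := by
          rw [hcancel]
  have hchoose : (t.choose M : ℝ) = (t.factorial : ℝ) / (M.factorial * k.factorial) := by
    rw [Nat.cast_choose ℝ hMt.le]
  have htt : (t : ℝ) ^ M * (t : ℝ) ^ k = (t : ℝ) ^ t := by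
    rw [← pow_add]; congr 1; omega
  have hrw : Real.exp 1 * Real.sqrt ↑M * (t.choose M : ℝ) * ((M : ℝ) / t) ^ M *
        ((k : ℝ) / t) ^ k =
      (Real.exp 1 * Real.sqrt ↑M * (M : ℝ) ^ M * t.factorial * (k : ℝ) ^ k) /
        ((M.factorial : ℝ) * k.factorial * (t : ℝ) ^ t) := by
    rw [hchoose, div_pow, div_pow, ← htt]
    field_simp
  rw [hrw, le_div_iff₀ (by positivity), one_mul]
  exact hmain

/-- Poisson-approximation-like bound: if `S_mix` is uniform over the `M`-element subsets
of a `t`-element set `E` (with `1 ≤ M < t`) and `S_in` is obtained by independent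
Bernoulli(`M/t`) sampling of the elements of `E`, then for every collection of subsets
of `E` (given by the predicate `P`), `Pr(S_mix ∈ F) ≤ e·√M·Pr(S_in ∈ F)`. -/
theorem stmt6 {α : Type*} [DecidableEq α] (E : Finset α) (t M : ℕ)
    (hE : E.card = t) (hM : 1 ≤ M) (hMt : M < t) (P : Finset α → Prop) :
    prUnif E M P ≤ Real.exp 1 * Real.sqrt M * prBer E ((M : ℝ) / t) P := by
  have ht0 : (0 : ℝ) < t := by exact_mod_cast (by omega : 0 < t)
  set p : ℝ := (M : ℝ) / t with hp
  have hp0 : 0 ≤ p := by positivity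
  have hq0 : 0 ≤ 1 - p := by
    rw [hp, sub_nonneg, div_le_one ht0]
    exact_mod_cast hMt.le
  have h1p : 1 - p = ((t - M : ℕ) : ℝ) / t := by
    rw [hp, Nat.cast_sub hMt.le]
    field_simp
  set N : ℝ := ∑ S ∈ E.powersetCard M, if P S then (1 : ℝ) else 0 with hN
  have hN0 : 0 ≤ N := Finset.sum_nonneg fun S _ => by split <;> norm_num
  have hC : ((E.powersetCard M).card : ℝ) = (t.choose M : ℝ) := by
    rw [Finset.card_powersetCard, hE]
  have hCpos : (0 : ℝ) < ((E.powersetCard M).card : ℝ) := by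
    rw [hC]; exact_mod_cast Nat.choose_pos hMt.le
  have hsub : E.powersetCard M ⊆ E.powerset := fun S hS =>
    Finset.mem_powerset.mpr (Finset.mem_powersetCard.mp hS).1
  have hBer : N * (p ^ M * (1 - p) ^ (t - M)) ≤ prBer E p P := by
    calc N * (p ^ M * (1 - p) ^ (t - M))
        = ∑ S ∈ E.powersetCard M, (if P S then p ^ M * (1 - p) ^ (t - M) else 0) := by
          rw [hN, Finset.sum_mul]
          exact Finset.sum_congr rfl fun S hS => by split <;> simp
      _ = ∑ S ∈ E.powersetCard M,
            (if P S then p ^ S.card * (1 - p) ^ (E.card - S.card) else 0) :=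
          Finset.sum_congr rfl fun S hS => by
            rw [(Finset.mem_powersetCard.mp hS).2, hE]
      _ ≤ prBer E p P := by
          refine Finset.sum_le_sum_of_subset_of_nonneg hsub fun S _ _ => ?_
          split
          · positivity
          · exact le_refl 0
  have hkey := keyBound t M hM hMt
  rw [← hp, ← h1p, ← hC] at hkey
  have hfrac : 1 / ((E.powersetCard M).card : ℝ) ≤
      Real.exp 1 * Real.sqrt M * (p ^ M * (1 - p) ^ (t - M)) := by
    rw [div_le_iff₀ hCpos]
    calc (1 : ℝ) ≤ Real.exp 1 * Real.sqrt M * ((E.powersetCard M).card : ℝ) * p ^ M *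
          (1 - p) ^ (t - M) := hkey
      _ = Real.exp 1 * Real.sqrt M * (p ^ M * (1 - p) ^ (t - M)) *
          ((E.powersetCard M).card : ℝ) := by ring
  have hX0 : (0 : ℝ) ≤ Real.exp 1 * Real.sqrt M := by positivity
  calc prUnif E M P = N * (1 / ((E.powersetCard M).card : ℝ)) := by
        rw [prUnif, ← hN, div_eq_mul_one_div]
    _ ≤ N * (Real.exp 1 * Real.sqrt M * (p ^ M * (1 - p) ^ (t - M))) :=
        mul_le_mul_of_nonneg_left hfrac hN0
    _ = Real.exp 1 * Real.sqrt M * (N * (p ^ M * (1 - p) ^ (t - M))) := by ring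
    _ ≤ Real.exp 1 * Real.sqrt M * prBer E p P :=
        mul_le_mul_of_nonneg_left hBer hX0
    _ = Real.exp 1 * Real.sqrt ↑M * prBer E ((M : ℝ) / t) P := by rw [hp]
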